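/- arXiv:2105.10380 — 2 statements merged into one kernel-verified Lean document; each statement's English description precedes it below -/
import Mathlib

section
/- Let G be a second countable locally compact group, π a unitary representation of G on a separable complex Hilbert space H with no nonzero invariant vectors, and μ an adapted probability measure on G. Let ∂_μ : H → Z¹_μ(G,π) be the coboundary operator ξ ↦ (g ↦ ξ − π(g)ξ). Then ∂_μ is a bounded injective operator with ∂_μ*∂_μ = Δ_μ, where Δ_μ = ∫_G (1−π(g))*(1−π(g)) dμ(g) ∈ B(H) is the Laplacian. Moreover, if ∂_μ = U_μ Δ_μ^{1/2} is the polar decomposition of ∂_μ, then U_μ is an isometry from H onto the closure of B¹(G,π) in Z¹_μ(G,π), and for ξ ∈ H one has U_μ ξ ∈ B¹(G,π) if and only if ξ belongs to the range of Δ_μ^{1/2}. -/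
noncomputable section

open MeasureTheory Filter Topology Pointwise

namespace Evan

variable {𝕜 : Type} [RCLike 𝕜]
variable {G : Type} [Group G] [TopologicalSpace G] [IsTopologicalGroup G]
variable {H : Type} [NormedAddCommGroup H] [InnerProductSpace 𝕜 H] [CompleteSpace H]

/-- A continuous unitary (orthogonal, when `𝕜 = ℝ`) representation of `G` on `H`:
a homomorphism into the unitary group which is continuous for the topology
of pointwise norm convergence. -/
structure IsUnitaryRep (π : G →* (H →L[𝕜] H)) : Prop where
  mem_unitary : ∀ g, π g ∈ unitary (H →L[𝕜] H)
  cont : ∀ ξ : H, Continuous fun g => π g ξ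

/-- The commutant `π(G)'` of a representation. -/
def commutant (π : G →* (H →L[𝕜] H)) : Set (H →L[𝕜] H) :=
  {T | ∀ g, T * π g = π g * T}

/-- The bicommutant `π(G)''`, i.e. the von Neumann algebra generated by `π(G)`. -/
def bicommutant (π : G →* (H →L[𝕜] H)) : Set (H →L[𝕜] H) :=
  Set.centralizer (commutant π)

/-- Closure of a set of operators in the weak operator topology. -/
def wotClosure (𝕜 : Type) {H : Type} [RCLike 𝕜] [NormedAddCommGroup H]
    [InnerProductSpace 𝕜 H] (S : Set (H →L[𝕜] H)) : Set (H →L[𝕜] H) :=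
  (ContinuousLinearMapWOT.ofCLM : (H →L[𝕜] H) → H →WOT[𝕜] H) ⁻¹'
    closure ((ContinuousLinearMapWOT.ofCLM : (H →L[𝕜] H) → H →WOT[𝕜] H) '' S)

/-- A continuous `1`-cocycle for the representation `π`. -/
def IsCocycle (π : G →* (H →L[𝕜] H)) (c : G → H) : Prop :=
  Continuous c ∧ ∀ g h : G, c (g * h) = c g + π g (c h)

/-- A coboundary: `c g = ξ - π g ξ` for some `ξ`. -/
def IsCoboundary (π : G →* (H →L[𝕜] H)) (c : G → H) : Prop :=
  ∃ ξ : H, ∀ g : G, c g = ξ - π g ξ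

/-- `c` is an almost coboundary: it lies in the closure of the set of coboundaries for
the topology of uniform convergence on compact subsets of `G`. -/
def IsAlmostCoboundary (π : G →* (H →L[𝕜] H)) (c : G → H) : Prop :=
  ∀ Q : Set G, IsCompact Q → ∀ ε : ℝ, 0 < ε → ∃ ξ : H, ∀ g ∈ Q, ‖c g - (ξ - π g ξ)‖ ≤ ε

/-- The reduction ideal `I(c) = {T ∈ π(G)' : T·c ∈ B¹(G,π)}`. -/
def reductionIdeal (π : G →* (H →L[𝕜] H)) (c : G → H) : Set (H →L[𝕜] H) :=
  {T | T ∈ commutant π ∧ IsCoboundary π fun g => T (c g)}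

/-- `c` is evanescent: `I(c)` is dense in `π(G)'` for the weak operator topology. -/
def IsEvanescent (π : G →* (H →L[𝕜] H)) (c : G → H) : Prop :=
  commutant π ⊆ wotClosure 𝕜 (reductionIdeal π c)

/-- `c` is irreducible: `I(c) = {0}`. -/
def IsIrreducibleCocycle (π : G →* (H →L[𝕜] H)) (c : G → H) : Prop :=
  reductionIdeal π c = {0}

/-- `π` has almost invariant vectors. -/
def HasAlmostInvariantVectors (π : G →* (H →L[𝕜] H)) : Prop :=
  ∀ Q : Set G, IsCompact Q → ∀ ε : ℝ, 0 < ε →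
    ∃ ξ : H, ‖ξ‖ = 1 ∧ ∀ g ∈ Q, ‖π g ξ - ξ‖ ≤ ε

/-- `π` is irreducible: the only closed invariant subspaces are `⊥` and `⊤`. -/
def IsIrreducibleRep (π : G →* (H →L[𝕜] H)) : Prop :=
  ∀ K : Submodule 𝕜 H, IsClosed (K : Set H) → (∀ g : G, ∀ x ∈ K, π g x ∈ K) →
    K = ⊥ ∨ K = ⊤

/-- A projection: a self-adjoint idempotent. -/
def IsProjection (p : H →L[𝕜] H) : Prop :=
  IsSelfAdjoint p ∧ p * p = p

/-- The reduction ideal of the projected cocycle `p·c`, viewed as a cocycle for the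
subrepresentation of `π` on `pH`, whose commutant is identified with the corner
`p π(G)' p` (a von Neumann algebra with unit `p`). -/
def projReductionIdeal (π : G →* (H →L[𝕜] H)) (c : G → H) (p : H →L[𝕜] H) :
    Set (H →L[𝕜] H) :=
  {T | T ∈ commutant π ∧ p * T = T ∧ T * p = T ∧
    ∃ ξ : H, p ξ = ξ ∧ ∀ g : G, T (c g) = ξ - π g ξ}

/-- The projected cocycle `p·c` is evanescent: its reduction ideal is dense, in the weak
operator topology, in the commutant of the subrepresentation on `pH` (the corner
`p π(G)' p`). -/
def ProjIsEvanescent (π : G →* (H →L[𝕜] H)) (c : G → H) (p : H →L[𝕜] H) : Prop :=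
  {T | T ∈ commutant π ∧ p * T = T ∧ T * p = T} ⊆
    wotClosure 𝕜 (projReductionIdeal π c p)

/-- The projected cocycle `p·c` is irreducible: its reduction ideal is `{0}`. -/
def ProjIsIrreducible (π : G →* (H →L[𝕜] H)) (c : G → H) (p : H →L[𝕜] H) : Prop :=
  projReductionIdeal π c p = {0}

/-- `G` is weak identity excluding (WIE): every irreducible unitary representation of `G`
on a separable complex Hilbert space that has almost invariant vectors is trivial. -/
def IsWIE (G : Type) [Group G] [TopologicalSpace G] [IsTopologicalGroup G] : Prop :=
  ∀ (H : Type) (_ : NormedAddCommGroup H) (_ : InnerProductSpace ℂ H)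
    (_ : CompleteSpace H) (_ : TopologicalSpace.SeparableSpace H)
    (π : G →* (H →L[ℂ] H)), IsUnitaryRep π → IsIrreducibleRep π →
      HasAlmostInvariantVectors π → ∀ g : G, π g = 1

/-- The support of a measure on a topological space: the set of points all of whose
open neighbourhoods have positive measure. -/
def measSupport {G : Type} [TopologicalSpace G] [MeasurableSpace G] (μ : Measure G) :
    Set G :=
  {g | ∀ U : Set G, IsOpen U → g ∈ U → 0 < μ U}

/-- An adapted probability measure on `G`: symmetric, absolutely continuous with respect
to the Haar measure, and whose support generates `G`. -/
structure IsAdapted {G : Type} [Group G] [TopologicalSpace G] [IsTopologicalGroup G]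
    [LocallyCompactSpace G] [MeasurableSpace G] [BorelSpace G] (μ : Measure G) :
    Prop where
  prob : IsProbabilityMeasure μ
  symmetric : μ.inv = μ
  absCont : μ ≪ MeasureTheory.Measure.haar
  generates : Subgroup.closure (measSupport μ) = ⊤

/-- The word-length function associated to a generating set `S`. -/
def wordLength {G : Type} [Group G] (S : Set G) (g : G) : ℕ :=
  sInf {n : ℕ | g ∈ (S ∪ S⁻¹ ∪ {1}) ^ n}

/-- `μ` has a second moment with respect to some compact generating set of `G`. -/
def HasSecondMoment {G : Type} [Group G] [TopologicalSpace G] [MeasurableSpace G]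
    (μ : Measure G) : Prop :=
  ∃ S : Set G, IsCompact S ∧ Subgroup.closure S = ⊤ ∧
    Integrable (fun g => (wordLength S g : ℝ) ^ 2) μ

/-- For a representation without nonzero invariant vectors and an
adapted probability measure `μ`, the coboundary operator `∂_μ : H → Z¹_μ(G,π) ⊆ L²(G,μ;H)`
is injective, satisfies `∂_μ* ∂_μ = Δ_μ`, and its polar decomposition `∂_μ = U_μ Δ_μ^{1/2}`
has `U_μ` an isometry onto the `L²`-closure of the coboundaries, with `U_μ ξ` a coboundary
iff `ξ ∈ ran Δ_μ^{1/2}`. -/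
theorem coboundary_operator_polar_decomposition
    (G : Type) [Group G] [TopologicalSpace G] [IsTopologicalGroup G]
    [LocallyCompactSpace G] [SecondCountableTopology G]
    [MeasurableSpace G] [BorelSpace G]
    (H : Type) [NormedAddCommGroup H] [InnerProductSpace ℂ H] [CompleteSpace H]
    [TopologicalSpace.SeparableSpace H]
    (π : G →* (H →L[ℂ] H)) (hπ : IsUnitaryRep π)
    (hnoinv : ∀ ξ : H, (∀ g : G, π g ξ = ξ) → ξ = 0)
    (μ : Measure G) (hμ : IsAdapted μ)
    (D : H →L[ℂ] Lp H 2 μ)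
    (hD : ∀ ξ : H, (D ξ : G → H) =ᵐ[μ] fun g => ξ - π g ξ)
    (Δ : H →L[ℂ] H)
    (hΔ : ∀ ξ η : H, (inner ℂ (Δ ξ) η : ℂ) = ∫ g, (inner ℂ (ξ - π g ξ) (η - π g η) : ℂ) ∂μ)
    (R : H →L[ℂ] H) (hR : R.IsPositive) (hRR : R * R = Δ) :
    Function.Injective D ∧
    (ContinuousLinearMap.adjoint D).comp D = Δ ∧
    ∃ U : H →L[ℂ] Lp H 2 μ, (∀ ξ : H, ‖U ξ‖ = ‖ξ‖) ∧ D = U.comp R ∧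
      Set.range U = closure (Set.range D) ∧
      ∀ ξ : H, U ξ ∈ Set.range D ↔ ξ ∈ Set.range R := by
  haveI := hμ.prob
  have hπnorm : ∀ (g : G) (v : H), ‖π g v‖ = ‖v‖ := fun g v =>
    ContinuousLinearMap.norm_map_of_mem_unitary (hπ.mem_unitary g) v
  -- key inner product identity
  have hinner : ∀ ξ η : H, (inner ℂ (D ξ) (D η) : ℂ) = inner ℂ (Δ ξ) η := by
    intro ξ η
    rw [MeasureTheory.L2.inner_def, hΔ]
    refine integral_congr_ae ?_
    filter_upwards [hD ξ, hD η] with g h1 h2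
    rw [h1, h2]
  -- D* D = Δ
  have hDDΔ : (ContinuousLinearMap.adjoint D).comp D = Δ := by
    ext ξ
    refine ext_inner_right ℂ fun η => ?_
    rw [ContinuousLinearMap.comp_apply, ContinuousLinearMap.adjoint_inner_left, hinner]
  -- D has trivial kernel
  have hDker : ∀ ξ : H, D ξ = 0 → ξ = 0 := by
    intro ξ hDξ
    have h0 : (∫ g, (inner ℂ (ξ - π g ξ) (ξ - π g ξ) : ℂ) ∂μ) = 0 := by
      rw [← hΔ ξ ξ, ← hinner, hDξ, inner_zero_left]
    set f : G → ℝ := fun g => ‖ξ - π g ξ‖ ^ 2 with hf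
    have hfc : Continuous f := ((continuous_const.sub (hπ.cont ξ)).norm).pow 2
    have hfint : Integrable f μ := by
      refine ⟨hfc.aestronglyMeasurable, ?_⟩
      refine HasFiniteIntegral.of_bounded (C := (2 * ‖ξ‖) ^ 2) ?_
      filter_upwards with g
      have hb : ‖ξ - π g ξ‖ ≤ 2 * ‖ξ‖ := by
        calc ‖ξ - π g ξ‖ ≤ ‖ξ‖ + ‖π g ξ‖ := norm_sub_le _ _
          _ = 2 * ‖ξ‖ := by rw [hπnorm]; ring
      have h2 : ‖ξ - π g ξ‖ ^ 2 ≤ (2 * ‖ξ‖) ^ 2 :=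
        pow_le_pow_left₀ (norm_nonneg _) hb 2
      simpa [hf, Real.norm_eq_abs, abs_of_nonneg (sq_nonneg ‖ξ - π g ξ‖)] using h2
    have hre : ∫ g, f g ∂μ = 0 := by
      have h1 : ∫ g, (RCLike.ofReal (f g) : ℂ) ∂μ = 0 := by
        have hfun : (fun g => (RCLike.ofReal (f g) : ℂ)) =
            fun g => (inner ℂ (ξ - π g ξ) (ξ - π g ξ) : ℂ) := by
          funext g
          rw [inner_self_eq_norm_sq_to_K, hf]
          norm_cast
        rw [hfun]
        exact h0
      rw [integral_ofReal] at h1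
      exact RCLike.ofReal_eq_zero.mp h1
    have hae : f =ᵐ[μ] 0 :=
      (integral_eq_zero_iff_of_nonneg (fun g => sq_nonneg _) hfint).mp hre
    have hμ0 : μ {g : G | ¬ π g ξ = ξ} = 0 := by
      rw [← ae_iff]
      filter_upwards [hae] with g hg
      have h2 : ‖ξ - π g ξ‖ ^ 2 = 0 := hg
      have h3 : ξ - π g ξ = 0 := by
        have := pow_eq_zero_iff (n := 2) two_ne_zero |>.mp h2
        exact norm_eq_zero.mp this
      have := sub_eq_zero.mp h3
      exact this.symm
    -- the stabilizer subgroup of ξ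
    let K : Subgroup G :=
      { carrier := {g : G | π g ξ = ξ}
        one_mem' := by simp
        mul_mem' := by
          intro a b ha hb
          have ha' : π a ξ = ξ := ha
          have hb' : π b ξ = ξ := hb
          show π (a * b) ξ = ξ
          rw [map_mul, ContinuousLinearMap.mul_apply, hb', ha']
        inv_mem' := by
          intro a ha
          have ha' : π a ξ = ξ := ha
          show π a⁻¹ ξ = ξ
          conv_lhs => rw [← ha']
          rw [← ContinuousLinearMap.mul_apply, ← map_mul, inv_mul_cancel, map_one,
            ContinuousLinearMap.one_apply] }
    have hsupp : measSupport μ ⊆ (K : Set G) := by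
      intro g hg
      by_contra hgn
      have hopen : IsOpen {h : G | ¬ π h ξ = ξ} := by
        have hcl : IsClosed {h : G | π h ξ = ξ} := isClosed_eq (hπ.cont ξ) continuous_const
        simpa [Set.compl_setOf] using hcl.isOpen_compl
      have hpos := hg _ hopen hgn
      rw [hμ0] at hpos
      exact lt_irrefl _ hpos
    have hK : ∀ g : G, g ∈ K := by
      have h1 : Subgroup.closure (measSupport μ) ≤ K := (Subgroup.closure_le K).mpr hsupp
      rw [hμ.generates] at h1
      exact fun g => h1 (Subgroup.mem_top g)
    exact hnoinv ξ fun g => hK g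
  have hDinj : Function.Injective D := by
    intro a b hab
    have : D (a - b) = 0 := by rw [map_sub, hab, sub_self]
    have := hDker _ this
    exact sub_eq_zero.mp this
  -- ‖D ξ‖ = ‖R ξ‖
  have hnormDR : ∀ ξ : H, ‖D ξ‖ = ‖R ξ‖ := by
    intro ξ
    have h1 : (inner ℂ (D ξ) (D ξ) : ℂ) = inner ℂ (R ξ) (R ξ) := by
      rw [hinner, ← hRR, ContinuousLinearMap.mul_apply,
        ← ContinuousLinearMap.adjoint_inner_left, hR.isSelfAdjoint.adjoint_eq]
    rw [inner_self_eq_norm_sq_to_K, inner_self_eq_norm_sq_to_K] at h1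
    have h2 : (‖D ξ‖ : ℝ) ^ 2 = ‖R ξ‖ ^ 2 := by exact_mod_cast h1
    nlinarith [norm_nonneg (D ξ), norm_nonneg (R ξ)]
  have hRinj : Function.Injective R := by
    intro a b hab
    have h1 : R (a - b) = 0 := by rw [map_sub, hab, sub_self]
    have h2 : D (a - b) = 0 := by
      have := hnormDR (a - b)
      rw [h1, norm_zero] at this
      exact norm_eq_zero.mp this
    exact sub_eq_zero.mp (hDker _ h2)
  -- R has dense range
  set Kr : Submodule ℂ H := LinearMap.range (R : H →ₗ[ℂ] H) with hKr
  have hdense : Dense (Kr : Set H) := by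
    have horth : Krᗮ = ⊥ := by
      rw [Submodule.eq_bot_iff]
      intro v hv
      have hRv : R v = 0 := by
        refine ext_inner_left ℂ fun w => ?_
        rw [inner_zero_right, ← ContinuousLinearMap.adjoint_inner_left, hR.isSelfAdjoint.adjoint_eq]
        exact (Submodule.mem_orthogonal _ _).mp hv (R w) ⟨w, rfl⟩
      have h5 : R v = R 0 := by rw [map_zero, hRv]
      exact hRinj h5
    have htop : Kr.topologicalClosure = ⊤ := Submodule.topologicalClosure_eq_top_iff.mpr horth
    have : closure (Kr : Set H) = Set.univ := by
      have := congrArg (fun S : Submodule ℂ H => (S : Set H)) htop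
      simpa [Submodule.topologicalClosure_coe] using this
    rw [dense_iff_closure_eq, this]
  -- the partial isometry on the range of R
  have heqv := LinearEquiv.ofInjective (R : H →ₗ[ℂ] H) hRinj
  set eqv : H ≃ₗ[ℂ] Kr := LinearEquiv.ofInjective (R : H →ₗ[ℂ] H) hRinj with heqvdef
  have heqv_coe : ∀ x : H, (eqv x : H) = R x := fun x => rfl
  set U₀ : Kr →ₗ[ℂ] Lp H 2 μ := (D : H →ₗ[ℂ] Lp H 2 μ).comp eqv.symm.toLinearMap with hU₀def
  have hU₀app : ∀ x : H, U₀ (eqv x) = D x := by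
    intro x
    simp [hU₀def, eqv.symm_apply_apply]
  have hU₀norm : ∀ y : Kr, ‖U₀ y‖ = ‖y‖ := by
    intro y
    have hy : eqv (eqv.symm y) = y := eqv.apply_symm_apply y
    have hy' : R (eqv.symm y) = (y : H) := by
      rw [← heqv_coe, hy]
    have h1 : U₀ y = D (eqv.symm y) := by
      simp [hU₀def]
    rw [h1, hnormDR, hy']
    rfl
  set U₀i : Kr →ₗᵢ[ℂ] Lp H 2 μ := ⟨U₀, hU₀norm⟩ with hU₀idef
  set e : Kr →L[ℂ] H := Kr.subtypeL with hedef
  have h_e : IsUniformInducing (e : Kr → H) := by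
    have : (e : Kr → H) = Subtype.val := rfl
    rw [this]
    exact isUniformEmbedding_subtype_val.isUniformInducing
  have h_dense : DenseRange (e : Kr → H) := by
    have : (e : Kr → H) = Subtype.val := rfl
    rw [this]
    exact hdense.denseRange_val
  set U : H →L[ℂ] Lp H 2 μ :=
    ContinuousLinearMap.extend U₀i.toContinuousLinearMap e with hUdef
  have hUR : ∀ x : H, U (R x) = D x := by
    intro x
    have h1 : U (e (eqv x)) = U₀i.toContinuousLinearMap (eqv x) :=
      ContinuousLinearMap.extend_eq _ h_dense h_e _
    have h2 : e (eqv x) = R x := heqv_coe x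
    rw [h2] at h1
    rw [h1]
    exact hU₀app x
  have hUnorm : ∀ ξ : H, ‖U ξ‖ = ‖ξ‖ := by
    have heq : (fun ξ : H => ‖U ξ‖) = fun ξ : H => ‖ξ‖ := by
      refine Continuous.ext_on hdense (U.continuous.norm) continuous_norm ?_
      rintro ξ ⟨x, rfl⟩
      show ‖U (R x)‖ = ‖R x‖
      rw [hUR, hnormDR]
    exact fun ξ => congrFun heq ξ
  have hUiso : Isometry (U : H → Lp H 2 μ) :=
    AddMonoidHomClass.isometry_of_norm U hUnorm
  have hUclosed : IsClosed (Set.range (U : H → Lp H 2 μ)) :=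
    hUiso.isClosedEmbedding.isClosed_range
  have hrangesub : Set.range (D : H → Lp H 2 μ) ⊆ Set.range (U : H → Lp H 2 μ) := by
    rintro _ ⟨x, rfl⟩
    exact ⟨R x, hUR x⟩
  refine ⟨hDinj, hDDΔ, U, hUnorm, ?_, ?_, ?_⟩
  · refine ContinuousLinearMap.ext fun x => ?_
    rw [ContinuousLinearMap.comp_apply, hUR]
  · apply le_antisymm
    · rintro _ ⟨ξ, rfl⟩
      have hξ : ξ ∈ closure (Kr : Set H) := hdense ξ
      have h1 : U ξ ∈ U '' closure (Kr : Set H) := ⟨ξ, hξ, rfl⟩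
      have h2 : U ξ ∈ closure (U '' (Kr : Set H)) :=
        (image_closure_subset_closure_image U.continuous) h1
      refine closure_mono ?_ h2
      rintro _ ⟨_, ⟨x, rfl⟩, rfl⟩
      exact ⟨x, (hUR x).symm⟩
    · exact closure_minimal hrangesub hUclosed
  · intro ξ
    constructor
    · rintro ⟨x, hx⟩
      have : U (R x) = U ξ := by rw [hUR, hx]
      exact ⟨x, hUiso.injective this⟩
    · rintro ⟨x, rfl⟩
      exact ⟨x, (hUR x).symm⟩

end Evan
end
end

section
/- Let H be a separable complex Hilbert space, T ∈ B(H) a positive injective operator, and (e_n)_{n∈ℤ} an orthonormal family in H such that each e_n belongs to the range of T and Σ_{n∈ℤ} n² ‖T e_n‖² < ∞. In the Hilbert space ℓ²(ℤ; H), let ξ be the element ξ(n) = n · T e_n. For S ∈ B(ℓ²(ℤ)), let id⊗S ∈ B(ℓ²(ℤ; H)) be the amplification of S, determined by ((id⊗S)f)(j) = Σ_{n∈ℤ} ⟨δ_j, S δ_n⟩ f(n) for f ∈ ℓ²(ℤ; H), and let T⊗id ∈ B(ℓ²(ℤ; H)) act pointwise by ((T⊗id)f)(j) = T(f(j)). Then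 (id⊗S)ξ belongs to the range of T⊗id if and only if Σ_{n∈ℤ} n² ‖S δ_n‖² < ∞. -/
noncomputable section

open MeasureTheory Filter Topology Pointwise

namespace Evan

variable {𝕜 : Type} [RCLike 𝕜]
variable {G : Type} [Group G] [TopologicalSpace G] [IsTopologicalGroup G]
variable {H : Type} [NormedAddCommGroup H] [InnerProductSpace 𝕜 H] [CompleteSpace H]

/-! Write `r n := n • S δₙ ∈ ℓ²(ℤ)`, so that `((id ⊗ S) ξ)(j) = Σₙ (r n j) • T eₙ` and the
right-hand side of the criterion is `Σₙ ‖r n‖²`. Since `T` is self-adjoint and `eₘ = T vₘ`,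
any `x` with `T x = Σₙ aₙ • T eₙ` has Fourier coefficients `⟪eₘ, x⟫ = ⟪vₘ, T x⟫ = aₘ`, so by
Bessel `Σₙ |aₙ|² ≤ ‖x‖²`; conversely, if `(aₙ) ∈ ℓ²` then `x = Σₙ aₙ • eₙ` is a preimage with
`‖x‖² = Σₙ |aₙ|²`. Applied row by row (`aₙ = r n j`), `(id ⊗ S) ξ` lies in the range of `T ⊗ id`
iff `Σⱼ Σₙ ‖r n j‖² < ∞`, and Tonelli turns this double series into `Σₙ ‖r n‖²`. -/

open scoped InnerProductSpace

section lpTwo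

variable {α : Type*} {E : α → Type*} [∀ i, NormedAddCommGroup (E i)]

theorem lp.norm_sq_eq_tsum (f : lp E 2) : ‖f‖ ^ 2 = ∑' i, ‖f i‖ ^ 2 := by
  simpa using lp.norm_rpow_eq_tsum (p := 2) (by norm_num) f

theorem lp.summable_norm_sq (f : lp E 2) : Summable fun i => ‖f i‖ ^ 2 := by
  simpa using (lp.memℓp f).summable (p := 2) (by norm_num)

theorem memℓp_two_of_summable_norm_sq {f : ∀ i, E i} (h : Summable fun i => ‖f i‖ ^ 2) :
    Memℓp f 2 :=
  memℓp_gen (by simpa using h)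

end lpTwo

theorem summable_tsum_swap_of_nonneg {α β : Type*} {F : α → β → ℝ} (hF : ∀ a b, 0 ≤ F a b)
    (hrow : ∀ a, Summable (F a)) (h : Summable fun a => ∑' b, F a b) :
    (∀ b, Summable fun a => F a b) ∧ Summable fun b => ∑' a, F a b := by
  have hprod : Summable fun p : α × β => F p.1 p.2 :=
    (summable_prod_of_nonneg fun p => hF p.1 p.2).mpr ⟨hrow, h⟩
  exact (summable_prod_of_nonneg fun p : β × α => hF p.2 p.1).mp hprod.prod_symm

theorem summable_smul_of_summable_norm_sq {ι 𝕜 E : Type*} [NormedField 𝕜]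
    [NormedAddCommGroup E] [NormedSpace 𝕜 E] [CompleteSpace E] {a : ι → 𝕜} {f : ι → E}
    (ha : Summable fun n => ‖a n‖ ^ 2) (hf : Summable fun n => ‖f n‖ ^ 2) :
    Summable fun n => a n • f n := by
  refine .of_norm_bounded (ha.add hf) fun n => ?_
  rw [norm_smul]
  nlinarith [two_mul_le_add_sq ‖a n‖ ‖f n‖, norm_nonneg (a n), norm_nonneg (f n)]

theorem mem_range_iff_exists_summable_norm_sq {ι E F : Type*} [NormedAddCommGroup E]
    [NormedAddCommGroup F] (T : E → F) (Tid : lp (fun _ : ι => E) 2 → lp (fun _ : ι => F) 2)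
    (hTid : ∀ f j, Tid f j = T (f j)) (g : lp (fun _ : ι => F) 2) :
    g ∈ Set.range Tid ↔ ∃ x : ι → E, (Summable fun j => ‖x j‖ ^ 2) ∧ ∀ j, T (x j) = g j := by
  constructor
  · rintro ⟨f, rfl⟩
    exact ⟨f, lp.summable_norm_sq f, fun j => (hTid f j).symm⟩
  · rintro ⟨x, hx, hTx⟩
    exact ⟨⟨x, memℓp_two_of_summable_norm_sq hx⟩,
      lp.ext <| funext fun j => (hTid _ j).trans (hTx j)⟩

section Matrix

variable {ι 𝕜 : Type*} [RCLike 𝕜] [DecidableEq ι]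

theorem lp.inner_single_one_left (f : lp (fun _ : ι => 𝕜) 2) (j : ι) :
    ⟪lp.single 2 j (1 : 𝕜), f⟫_𝕜 = f j := by
  simp [lp.inner_single_left]

theorem summable_norm_sq_apply_single (S : lp (fun _ : ι => 𝕜) 2 →L[𝕜] lp (fun _ : ι => 𝕜) 2)
    (j : ι) : Summable fun n => ‖S (lp.single 2 n 1) j‖ ^ 2 := by
  refine (lp.summable_norm_sq (S.adjoint (lp.single 2 j 1))).congr fun n => ?_
  rw [← lp.inner_single_one_left (S _) j, ← ContinuousLinearMap.adjoint_inner_left,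
    lp.inner_single_right]
  simp

end Matrix

section Range

variable {ι 𝕜 E : Type*} [RCLike 𝕜] [NormedAddCommGroup E] [InnerProductSpace 𝕜 E]
  {T : E →L[𝕜] E} {e : ι → E} {a : ι → 𝕜} {x : E}

theorem inner_eq_of_hasSum_smul_apply (hT : T.IsSymmetric) (he : Orthonormal 𝕜 e) {m : ι}
    {v : E} (hv : T v = e m) (hx : HasSum (fun n => a n • T (e n)) (T x)) :
    ⟪e m, x⟫_𝕜 = a m := by
  classical
  have hcoeff : ∀ n, ⟪v, a n • T (e n)⟫_𝕜 = if n = m then a m else 0 := by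
    intro n
    rw [inner_smul_right, ← show ⟪T v, e n⟫_𝕜 = ⟪v, T (e n)⟫_𝕜 from hT v (e n), hv,
      orthonormal_iff_ite.mp he m n]
    by_cases h : n = m
    · simp [h]
    · simp [h, Ne.symm h]
  calc ⟪e m, x⟫_𝕜 = ⟪v, T x⟫_𝕜 := by rw [← hv]; exact hT v x
    _ = a m := by
      have := hx.mapL (innerSL 𝕜 v)
      simp only [innerSL_apply_apply, hcoeff] at this
      exact this.unique (hasSum_ite_eq m (a m))

theorem summable_norm_sq_of_hasSum_smul_apply (hT : T.IsSymmetric) (he : Orthonormal 𝕜 e)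
    (heran : ∀ n, e n ∈ Set.range T) (hx : HasSum (fun n => a n • T (e n)) (T x)) :
    (Summable fun n => ‖a n‖ ^ 2) ∧ ∑' n, ‖a n‖ ^ 2 ≤ ‖x‖ ^ 2 := by
  have hcoeff : a = fun n => ⟪e n, x⟫_𝕜 := funext fun n =>
    (inner_eq_of_hasSum_smul_apply hT he (heran n).choose_spec hx).symm
  subst hcoeff
  exact ⟨he.inner_products_summable x, he.tsum_inner_products_le x⟩

theorem exists_hasSum_smul_apply_of_summable [CompleteSpace E] (T : E →L[𝕜] E)
    (he : Orthonormal 𝕜 e) (ha : Summable fun n => ‖a n‖ ^ 2) :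
    ∃ x, HasSum (fun n => a n • T (e n)) (T x) ∧ ‖x‖ ^ 2 = ∑' n, ‖a n‖ ^ 2 := by
  let b : lp (fun _ : ι => 𝕜) 2 := ⟨a, memℓp_two_of_summable_norm_sq ha⟩
  refine ⟨he.orthogonalFamily.linearIsometry b, ?_, ?_⟩
  · simpa using (he.orthogonalFamily.hasSum_linearIsometry b).mapL T
  · rw [LinearIsometry.norm_map]
    exact lp.norm_sq_eq_tsum b

end Range

theorem amplified_range_criterion_general
    (H : Type) [NormedAddCommGroup H] [InnerProductSpace ℂ H] [CompleteSpace H]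
    (T : H →L[ℂ] H) (hTpos : T.IsPositive)
    (e : ℤ → H) (he : Orthonormal ℂ e) (heran : ∀ n : ℤ, e n ∈ Set.range T)
    (ξ : lp (fun _ : ℤ => H) 2)
    (hξ : ∀ n : ℤ, ξ n = (n : ℂ) • T (e n))
    (S : lp (fun _ : ℤ => ℂ) 2 →L[ℂ] lp (fun _ : ℤ => ℂ) 2)
    (AS : lp (fun _ : ℤ => H) 2 →L[ℂ] lp (fun _ : ℤ => H) 2)
    (hAS : ∀ (f : lp (fun _ : ℤ => H) 2) (j : ℤ),
      AS f j = ∑' n : ℤ, (inner ℂ (lp.single 2 j (1 : ℂ)) (S (lp.single 2 n 1)) : ℂ) • f n)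
    (Tid : lp (fun _ : ℤ => H) 2 →L[ℂ] lp (fun _ : ℤ => H) 2)
    (hTid : ∀ (f : lp (fun _ : ℤ => H) 2) (j : ℤ), Tid f j = T (f j)) :
    AS ξ ∈ Set.range Tid ↔
      Summable fun n : ℤ => (n : ℝ) ^ 2 * ‖S (lp.single 2 n 1)‖ ^ 2 := by
  let r : ℤ → lp (fun _ : ℤ => ℂ) 2 := fun n => (n : ℂ) • S (lp.single 2 n 1)
  have hr : ∀ n : ℤ, (n : ℝ) ^ 2 * ‖S (lp.single 2 n 1)‖ ^ 2 = ∑' j, ‖r n j‖ ^ 2 := fun n => by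
    rw [← lp.norm_sq_eq_tsum, norm_smul, mul_pow, Complex.norm_intCast, sq_abs]
  have hrow : ∀ j, HasSum (fun n => r n j • T (e n)) (AS ξ j) := fun j => by
    have := (summable_smul_of_summable_norm_sq (summable_norm_sq_apply_single S j)
      (lp.summable_norm_sq ξ)).hasSum
    simpa [r, hAS, lp.inner_single_one_left, hξ, smul_smul, mul_comm] using this
  rw [mem_range_iff_exists_summable_norm_sq T Tid hTid, summable_congr hr]
  constructor
  · rintro ⟨x, hx, hTx⟩
    have hbessel := fun j => summable_norm_sq_of_hasSum_smul_apply hTpos.isSymmetric he heran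
      (hTx j ▸ hrow j)
    exact (summable_tsum_swap_of_nonneg (fun _ _ => sq_nonneg _) (fun j => (hbessel j).1)
      (hx.of_nonneg_of_le (fun _ => tsum_nonneg fun _ => sq_nonneg _) fun j => (hbessel j).2)).2
  · intro hsum
    obtain ⟨hcol, hsum'⟩ := summable_tsum_swap_of_nonneg (F := fun n j => ‖r n j‖ ^ 2)
      (fun _ _ => sq_nonneg _) (fun n => lp.summable_norm_sq (r n)) hsum
    choose x hx hnorm using fun j => exists_hasSum_smul_apply_of_summable T he (hcol j)
    exact ⟨x, hsum'.congr fun j => (hnorm j).symm, fun j => (hx j).unique (hrow j)⟩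

/-- The range criterion for amplified vectors: with
`ξ = Σ n·(T eₙ) ⊗ δₙ ∈ ℓ²(ℤ;H)`, the vector `(id ⊗ S) ξ` lies in the range of `T ⊗ id`
iff `Σ n² ‖S δₙ‖² < ∞`. -/
theorem amplified_range_criterion
    (H : Type) [NormedAddCommGroup H] [InnerProductSpace ℂ H] [CompleteSpace H]
    [TopologicalSpace.SeparableSpace H]
    (T : H →L[ℂ] H) (hTpos : T.IsPositive) (hTinj : Function.Injective T)
    (e : ℤ → H) (he : Orthonormal ℂ e) (heran : ∀ n : ℤ, e n ∈ Set.range T)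
    (hesum : Summable fun n : ℤ => (n : ℝ) ^ 2 * ‖T (e n)‖ ^ 2)
    (ξ : lp (fun _ : ℤ => H) 2)
    (hξ : ∀ n : ℤ, ξ n = (n : ℂ) • T (e n))
    (S : lp (fun _ : ℤ => ℂ) 2 →L[ℂ] lp (fun _ : ℤ => ℂ) 2)
    (AS : lp (fun _ : ℤ => H) 2 →L[ℂ] lp (fun _ : ℤ => H) 2)
    (hAS : ∀ (f : lp (fun _ : ℤ => H) 2) (j : ℤ),
      AS f j = ∑' n : ℤ, (inner ℂ (lp.single 2 j (1 : ℂ)) (S (lp.single 2 n 1)) : ℂ) • f n)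
    (Tid : lp (fun _ : ℤ => H) 2 →L[ℂ] lp (fun _ : ℤ => H) 2)
    (hTid : ∀ (f : lp (fun _ : ℤ => H) 2) (j : ℤ), Tid f j = T (f j)) :
    AS ξ ∈ Set.range Tid ↔
      Summable fun n : ℤ => (n : ℝ) ^ 2 * ‖S (lp.single 2 n 1)‖ ^ 2 :=
  amplified_range_criterion_general H T hTpos e he heran ξ hξ S AS hAS Tid hTid

end Evan
end
end
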